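/- Define Φ₁ : ℂ → ℂ⁴ by Φ₁(z) = (−3z̄, 3z², √3(2|z|² − 1), √3·z·(2 − |z|²)). Then for every z ∈ ℂ: (i) |Φ₁(z)|² = 3(1 + |z|²)³; (ii) ⟨∂_z Φ₁(z), I(Φ₁(z))⟩ = −6(1 + |z|²)², where ∂_z Φ₁ = ½(∂ₓΦ₁ − i∂_yΦ₁); and consequently (iii) 4·|⟨∂_z Φ₁(z), I(Φ₁(z))⟩|² / |Φ₁(z)|⁴ = 16 / (1 + |z|²)². (This is the computation in Example 2.11 showing that the induced metric g_Ψ of the quaternionic harmonic map Ψ = Φ₂ : ℂP¹ → ℂP³ built from the Veronese-type curve equals 4 g_{S²}; in particular ∂̄Ψ has no zeroes and the round metric on the sphere is critical for the second Dirac eigenvalue.) -/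

import Mathlib

open Complex

/-- Wirtinger derivative `∂_z F = ½(∂ₓF - i ∂_yF)` of a map `F : ℂ → E`. -/
noncomputable def wirtZ {E : Type*} [NormedAddCommGroup E] [NormedSpace ℂ E]
    (F : ℂ → E) (z : ℂ) : E :=
  (1 / 2 : ℂ) • (fderiv ℝ F z 1 - Complex.I • fderiv ℝ F z Complex.I)

/-- The first Frénet frame element `Φ₁(z) = (-3z̄, 3z², √3(2|z|² - 1), √3 z(2 - |z|²))`
of the horizontal holomorphic curve `Φ([1:z]) = [1 : z³ : -√3 z : √3 z²]`. -/
noncomputable def frenetPhi1 (z : ℂ) : Fin 4 → ℂ :=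
  ![-3 * (starRingEnd ℂ) z, 3 * z ^ 2,
    (Real.sqrt 3 : ℂ) * (2 * (Complex.normSq z : ℂ) - 1),
    (Real.sqrt 3 : ℂ) * z * (2 - (Complex.normSq z : ℂ))]

/-- The quaternionic structure `I(z₁, z₂, z₃, z₄) = (-z̄₂, z̄₁, -z̄₄, z̄₃)` on `ℂ⁴`. -/
def quatI4 (v : Fin 4 → ℂ) : Fin 4 → ℂ :=
  ![-(starRingEnd ℂ) (v 1), (starRingEnd ℂ) (v 0),
    -(starRingEnd ℂ) (v 3), (starRingEnd ℂ) (v 2)]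

/-- The Hermitian inner product `⟨u, v⟩ = Σⱼ uⱼ v̄ⱼ` on `ℂ⁴`. -/
noncomputable def herm4 (u v : Fin 4 → ℂ) : ℂ :=
  ∑ j, u j * (starRingEnd ℂ) (v j)

/-!
`Φ₁` is a polynomial in `z` and `z̄`, so `∂_z Φ₁` follows from the Leibniz rule together with
`∂_z z = 1` and `∂_z z̄ = 0`: it is `(0, 6z, 2√3 z̄, √3(2 - 2|z|²))`. Parts (i) and (ii) are then
polynomial identities in `z` and `z̄` modulo `(√3)² = 3`, and (iii) follows by taking norms.
-/

open ContinuousLinearMap ComplexConjugate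

section Wirtinger
variable {E : Type*} [NormedAddCommGroup E] [NormedSpace ℂ E] {z : ℂ}

theorem wirtZ_eq_deriv {f : ℂ → E} (hf : DifferentiableAt ℂ f z) : wirtZ f z = deriv f z := by
  rw [wirtZ, hf.fderiv_restrictScalars ℝ]
  simp only [coe_restrictScalars', fderiv_eq_smul_deriv, smul_smul, I_mul_I]
  module

theorem wirtZ_const (c : E) : wirtZ (fun _ : ℂ => c) z = 0 := by
  simp [wirtZ]

theorem wirtZ_sub {f g : ℂ → E} (hf : DifferentiableAt ℝ f z) (hg : DifferentiableAt ℝ g z) :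
    wirtZ (fun w => f w - g w) z = wirtZ f z - wirtZ g z := by
  simp only [wirtZ, fderiv_fun_sub hf hg, sub_apply]
  module

theorem wirtZ_id : wirtZ (fun w : ℂ => w) z = 1 := by
  rw [wirtZ_eq_deriv differentiableAt_fun_id, deriv_id'']

theorem wirtZ_conj : wirtZ (fun w : ℂ => conj w) z = 0 := by
  have : fderiv ℝ (fun w : ℂ => conj w) z = conjCLE.toContinuousLinearMap :=
    conjCLE.toContinuousLinearMap.fderiv
  simp [wirtZ, this]

theorem wirtZ_mul {f g : ℂ → ℂ} (hf : DifferentiableAt ℝ f z) (hg : DifferentiableAt ℝ g z) :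
    wirtZ (fun w => f w * g w) z = wirtZ f z * g z + f z * wirtZ g z := by
  simp only [wirtZ, fderiv_fun_mul hf hg, add_apply, smul_apply, smul_eq_mul]
  ring

theorem wirtZ_pow {f : ℂ → ℂ} (n : ℕ) (hf : DifferentiableAt ℝ f z) :
    wirtZ (fun w => f w ^ n) z = n * f z ^ (n - 1) * wirtZ f z := by
  simp only [wirtZ, fderiv_fun_pow n hf, smul_apply, nsmul_eq_mul, smul_eq_mul]
  ring

theorem wirtZ_apply {ι : Type*} [Fintype ι] {F : ℂ → ι → E} (hF : DifferentiableAt ℝ F z)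
    (i : ι) : wirtZ F z i = wirtZ (fun w => F w i) z := by
  simp [wirtZ, fderiv_apply hF]

end Wirtinger

theorem frenetPhi1_eq_mul_conj : frenetPhi1 = fun w =>
    ![-3 * conj w, 3 * w ^ 2,
      (√3 : ℂ) * (2 * (w * conj w) - 1),
      (√3 : ℂ) * (w * (2 - w * conj w))] := by
  funext w
  simp only [frenetPhi1, mul_conj, mul_assoc]

theorem differentiableAt_frenetPhi1 (z : ℂ) : DifferentiableAt ℝ frenetPhi1 z := by
  rw [frenetPhi1_eq_mul_conj, differentiableAt_pi]
  intro i
  fin_cases i <;>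
    simp only [Fin.zero_eta, Fin.mk_one, Fin.reduceFinMk, Matrix.cons_val] <;> fun_prop

theorem wirtZ_frenetPhi1 (z : ℂ) : wirtZ frenetPhi1 z =
    ![0, 6 * z, 2 * √3 * conj z, √3 * (2 - 2 * (z * conj z))] := by
  ext i
  rw [wirtZ_apply (differentiableAt_frenetPhi1 z), frenetPhi1_eq_mul_conj]
  fin_cases i <;>
    simp (disch := fun_prop) only [Fin.zero_eta, Fin.mk_one, Fin.reduceFinMk, Matrix.cons_val,
      wirtZ_sub, wirtZ_mul, wirtZ_pow, wirtZ_const, wirtZ_id, wirtZ_conj] <;>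
    ring

theorem ofReal_sqrt_three_mul_self : (√3 : ℂ) * √3 = 3 := by
  rw [← ofReal_mul, Real.mul_self_sqrt (by norm_num)]
  norm_num

theorem herm4_frenetPhi1_self (z : ℂ) :
    herm4 (frenetPhi1 z) (frenetPhi1 z) = 3 * (1 + (normSq z : ℂ)) ^ 3 := by
  rw [frenetPhi1_eq_mul_conj, ← mul_conj]
  simp only [herm4, Fin.sum_univ_four, Matrix.cons_val, map_mul, map_sub, map_neg, map_one,
    map_ofNat, map_pow, conj_conj, conj_ofReal]
  linear_combination ((2 * (z * conj z) - 1) ^ 2 + z * conj z * (2 - z * conj z) ^ 2) *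
    ofReal_sqrt_three_mul_self

theorem herm4_wirtZ_frenetPhi1_quatI4 (z : ℂ) :
    herm4 (wirtZ frenetPhi1 z) (quatI4 (frenetPhi1 z)) = -6 * (1 + (normSq z : ℂ)) ^ 2 := by
  rw [wirtZ_frenetPhi1, frenetPhi1_eq_mul_conj, ← mul_conj]
  simp only [herm4, quatI4, Fin.sum_univ_four, Matrix.cons_val, map_mul, map_sub, map_neg,
    map_one, map_ofNat, map_pow, conj_conj, conj_ofReal]
  linear_combination (-2 * (z * conj z) * (2 - z * conj z) +
    (2 - 2 * (z * conj z)) * (2 * (z * conj z) - 1)) * ofReal_sqrt_three_mul_self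

/-- Example 2.11, metric computation: for
`Φ₁(z) = (-3z̄, 3z², √3(2|z|² - 1), √3 z(2 - |z|²))` one has `|Φ₁|² = 3(1 + |z|²)³`,
`⟨∂_z Φ₁, I(Φ₁)⟩ = -6(1 + |z|²)²`, and hence
`4|⟨∂_z Φ₁, I(Φ₁)⟩|²/|Φ₁|⁴ = 16/(1 + |z|²)²`, so the induced metric `g_Ψ` of the
quaternionic harmonic map `Ψ = Φ₂` equals `4 g_{S²}`. -/
theorem veronese_induced_metric :
    ∀ z : ℂ,
      herm4 (frenetPhi1 z) (frenetPhi1 z)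
          = 3 * (1 + (Complex.normSq z : ℂ)) ^ 3 ∧
      herm4 (wirtZ frenetPhi1 z) (quatI4 (frenetPhi1 z))
          = -6 * (1 + (Complex.normSq z : ℂ)) ^ 2 ∧
      4 * ‖herm4 (wirtZ frenetPhi1 z) (quatI4 (frenetPhi1 z))‖ ^ 2 /
          ‖herm4 (frenetPhi1 z) (frenetPhi1 z)‖ ^ 2
        = 16 / (1 + Complex.normSq z) ^ 2 := by
  intro z
  refine ⟨herm4_frenetPhi1_self z, herm4_wirtZ_frenetPhi1_quatI4 z, ?_⟩
  rw [herm4_frenetPhi1_self, herm4_wirtZ_frenetPhi1_quatI4]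
  have hpos : 0 < 1 + normSq z := add_pos_of_pos_of_nonneg one_pos (normSq_nonneg z)
  have hnorm : ‖1 + (normSq z : ℂ)‖ = 1 + normSq z := by
    rw [← ofReal_one, ← ofReal_add, norm_real, Real.norm_of_nonneg hpos.le]
  simp only [norm_mul, norm_neg, norm_pow, hnorm, RCLike.norm_ofNat]
  field_simp
  ring
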